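/- Let t ≥ 1 be an integer and let k = t+1. There exists n_0 = n_0(t) such that for every n ≥ n_0, every t-intersecting family F ⊆ binom([n], t+1) satisfies |I(F)| ≤ |I(A_t)|, where A_t = {A ∈ binom([n], t+1) : |A ∩ {1,…,t+2}| ≥ t+1}. -/
import Mathlib


open Finset

/-- The collection of distinct intersections `{F ∩ G : F, G ∈ 𝓕, F ≠ G}`. -/
def interFam (F : Finset (Finset ℕ)) : Finset (Finset ℕ) :=
  ((F ×ˢ F).filter fun p => p.1 ≠ p.2).image fun p => p.1 ∩ p.2

/-- A family is `t`-intersecting if any two members meet in at least `t` elements. -/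
def tIntersecting (t : ℕ) (F : Finset (Finset ℕ)) : Prop :=
  ∀ A ∈ F, ∀ B ∈ F, t ≤ (A ∩ B).card

/-- The family `𝓐_t = {A ∈ [n]^(k) : |A ∩ {1,…,t+2}| ≥ t+1}`. -/
def At (n k t : ℕ) : Finset (Finset ℕ) :=
  ((Finset.Icc 1 n).powersetCard k).filter fun A => t + 1 ≤ (A ∩ Finset.Icc 1 (t + 2)).card

/-- A `t`-intersecting family `F ⊆ [n]^(k)` is saturated if no `k`-set outside `F`
can be added keeping the `t`-intersecting property. -/
def saturated (n k t : ℕ) (F : Finset (Finset ℕ)) : Prop :=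
  ∀ G ∈ (Finset.Icc 1 n).powersetCard k, G ∉ F → ¬ tIntersecting t (insert G F)

/-- The family of `t`-transversals `T(F)`. -/
def transv (n k t : ℕ) (F : Finset (Finset ℕ)) : Finset (Finset ℕ) :=
  (Finset.Icc 1 n).powerset.filter fun T => T.card ≤ k ∧ ∀ A ∈ F, t ≤ (T ∩ A).card

/-- The minimal members (under inclusion) of a family. -/
def minFam (S : Finset (Finset ℕ)) : Finset (Finset ℕ) :=
  S.filter fun B => ∀ B' ∈ S, B' ⊆ B → B' = B

lemma mem_interFam {F : Finset (Finset ℕ)} {S : Finset ℕ} :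
    S ∈ interFam F ↔ ∃ A ∈ F, ∃ B ∈ F, A ≠ B ∧ A ∩ B = S := by
  simp only [interFam, mem_image, mem_filter, mem_product, Prod.exists]
  constructor
  · rintro ⟨a, b, ⟨⟨ha, hb⟩, hne⟩, h⟩
    exact ⟨a, ha, b, hb, hne, h⟩
  · rintro ⟨a, ha, b, hb, hne, h⟩
    exact ⟨a, b, ⟨⟨ha, hb⟩, hne⟩, h⟩

lemma card_inter_of_tint {t : ℕ} {A B : Finset ℕ} (hA : A.card = t + 1)
    (hB : B.card = t + 1) (hne : A ≠ B) (h : t ≤ (A ∩ B).card) :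
    (A ∩ B).card = t := by
  refine le_antisymm ?_ h
  by_contra hlt
  push_neg at hlt
  have h1 : A ∩ B = A := eq_of_subset_of_card_le inter_subset_left (by omega)
  have h2 : A ∩ B = B := eq_of_subset_of_card_le inter_subset_right (by omega)
  exact hne (h1 ▸ h2)

lemma key_sub {t : ℕ} {A B C : Finset ℕ} (hA : A.card = t + 1) (hB : B.card = t + 1)
    (hC : C.card = t + 1) (hne : A ≠ B) (hAB : (A ∩ B).card = t)
    (hCA : t ≤ (C ∩ A).card) (hCB : t ≤ (C ∩ B).card)
    (hnsub : ¬ C ⊆ A ∪ B) : C ∩ A = A ∩ B ∧ C ∩ (A ∪ B) = A ∩ B := by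
  obtain ⟨x, hxC, hxAB⟩ := not_subset.1 hnsub
  have h1 : C ∩ (A ∪ B) ⊆ C.erase x := by
    intro y hy
    simp only [mem_inter] at hy
    refine mem_erase.2 ⟨?_, hy.1⟩
    rintro rfl; exact hxAB hy.2
  have h2 : (C ∩ (A ∪ B)).card ≤ t := by
    calc (C ∩ (A ∪ B)).card ≤ (C.erase x).card := card_le_card h1
    _ = t := by rw [card_erase_of_mem hxC, hC]; omega
  have hCA' : C ∩ A = C ∩ (A ∪ B) :=
    eq_of_subset_of_card_le (inter_subset_inter Subset.rfl subset_union_left) (by omega)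
  have hCB' : C ∩ B = C ∩ (A ∪ B) :=
    eq_of_subset_of_card_le (inter_subset_inter Subset.rfl subset_union_right) (by omega)
  have hsub2 : C ∩ A ⊆ A ∩ B := by
    intro y hy
    have hyB : y ∈ C ∩ B := by rw [hCB', ← hCA']; exact hy
    exact mem_inter.2 ⟨(mem_inter.1 hy).2, (mem_inter.1 hyB).2⟩
  have heq : C ∩ A = A ∩ B := eq_of_subset_of_card_le hsub2 (by omega)
  exact ⟨heq, by rw [← hCA', heq]⟩

/-- Main upper bound: any t-intersecting family of (t+1)-sets has few intersections. -/
lemma card_interFam_le (t n : ℕ) (F : Finset (Finset ℕ))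
    (hF : F ⊆ (Finset.Icc 1 n).powersetCard (t + 1)) (hint : tIntersecting t F) :
    (interFam F).card ≤ (t + 2).choose t := by
  have hcard : ∀ A ∈ F, A.card = t + 1 := fun A hA => (mem_powersetCard.1 (hF hA)).2
  rcases eq_empty_or_nonempty (interFam F) with hE | ⟨S, hS⟩
  · simp [hE]
  obtain ⟨A, hAF, B, hBF, hne, hSeq⟩ := mem_interFam.1 hS
  have hA := hcard A hAF
  have hB := hcard B hBF
  have hAB : (A ∩ B).card = t := card_inter_of_tint hA hB hne (hint A hAF B hBF)
  have hUnion : (A ∪ B).card = t + 2 := by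
    have := card_union_add_card_inter A B
    omega
  by_cases hall : ∀ C ∈ F, C ⊆ A ∪ B
  · -- all members inside A ∪ B : intersections are t-subsets of A ∪ B
    have hsub : interFam F ⊆ (A ∪ B).powersetCard t := by
      intro T hT
      obtain ⟨A', hA', B', hB', hne', hTeq⟩ := mem_interFam.1 hT
      refine mem_powersetCard.2 ⟨?_, ?_⟩
      · rw [← hTeq]; exact (inter_subset_left).trans (hall A' hA')
      · rw [← hTeq]
        exact card_inter_of_tint (hcard A' hA') (hcard B' hB') hne' (hint A' hA' B' hB')
    calc (interFam F).card ≤ ((A ∪ B).powersetCard t).card := card_le_card hsub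
    _ = (t + 2).choose t := by rw [card_powersetCard, hUnion]
  · -- some member C sticks out; then every member contains A ∩ B
    push_neg at hall
    obtain ⟨C, hCF, hCnsub⟩ := hall
    have hC := hcard C hCF
    obtain ⟨hCA_eq, hCU_eq⟩ := key_sub hA hB hC hne hAB
      (hint C hCF A hAF) (hint C hCF B hBF) hCnsub
    have hkey : ∀ D ∈ F, A ∩ B ⊆ D := by
      intro D hDF
      by_cases hDsub : D ⊆ A ∪ B
      · rcases eq_or_ne D C with rfl | hDC
        · rw [← hCA_eq]; exact inter_subset_left
        · have hsub2 : D ∩ C ⊆ A ∩ B := by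
            intro y hy
            rw [← hCU_eq]
            exact mem_inter.2 ⟨(mem_inter.1 hy).2, hDsub (mem_inter.1 hy).1⟩
          have : D ∩ C = A ∩ B := eq_of_subset_of_card_le hsub2
            (by have := hint D hDF C hCF; omega)
          rw [← this]; exact inter_subset_left
      · have := (key_sub hA hB (hcard D hDF) hne hAB
          (hint D hDF A hAF) (hint D hDF B hBF) hDsub).1
        rw [← this]; exact inter_subset_left
    have hsingle : interFam F ⊆ {A ∩ B} := by
      intro T hT
      obtain ⟨A', hA', B', hB', hne', hTeq⟩ := mem_interFam.1 hT
      have h1 : A ∩ B ⊆ A' ∩ B' :=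
        subset_inter (hkey A' hA') (hkey B' hB')
      have h2 : (A' ∩ B').card = t :=
        card_inter_of_tint (hcard A' hA') (hcard B' hB') hne' (hint A' hA' B' hB')
      have : A ∩ B = A' ∩ B' := eq_of_subset_of_card_le h1 (by omega)
      simp [← hTeq, ← this]
    calc (interFam F).card ≤ 1 := by simpa using card_le_card hsingle
    _ ≤ (t + 2).choose t := Nat.one_le_iff_ne_zero.2 (Nat.choose_pos (by omega)).ne'

lemma At_eq (n t : ℕ) (hn : t + 2 ≤ n) :
    At n (t + 1) t = (Finset.Icc 1 (t + 2)).powersetCard (t + 1) := by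
  ext A
  simp only [At, mem_filter, mem_powersetCard]
  constructor
  · rintro ⟨⟨hsub, hcard⟩, hint⟩
    have h1 : A ∩ Finset.Icc 1 (t + 2) = A :=
      eq_of_subset_of_card_le inter_subset_left (by omega)
    refine ⟨?_, hcard⟩
    rw [← h1]; exact inter_subset_right
  · rintro ⟨hsub, hcard⟩
    have h1 : A ∩ Finset.Icc 1 (t + 2) = A := inter_eq_left.2 hsub
    refine ⟨⟨hsub.trans (Finset.Icc_subset_Icc_right hn), hcard⟩, ?_⟩
    rw [h1, hcard]

lemma interFam_powersetCard (S : Finset ℕ) (t : ℕ) (hS : S.card = t + 2) :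
    interFam (S.powersetCard (t + 1)) = S.powersetCard t := by
  ext T
  rw [mem_interFam]
  constructor
  · rintro ⟨A, hA, B, hB, hne, rfl⟩
    obtain ⟨hAs, hAc⟩ := mem_powersetCard.1 hA
    obtain ⟨hBs, hBc⟩ := mem_powersetCard.1 hB
    have hU : (A ∪ B).card ≤ t + 2 := hS ▸ card_le_card (union_subset hAs hBs)
    have hI : t ≤ (A ∩ B).card := by
      have := card_union_add_card_inter A B
      omega
    exact mem_powersetCard.2 ⟨inter_subset_left.trans hAs,
      card_inter_of_tint hAc hBc hne hI⟩
  · intro hT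
    obtain ⟨hTs, hTc⟩ := mem_powersetCard.1 hT
    have hsd : (S \ T).card = 2 := by
      rw [card_sdiff_of_subset hTs]; omega
    obtain ⟨x, y, hxy, hxyeq⟩ := card_eq_two.1 hsd
    have hx : x ∈ S \ T := by rw [hxyeq]; simp
    have hy : y ∈ S \ T := by rw [hxyeq]; simp
    have hxS := (mem_sdiff.1 hx).1
    have hxT := (mem_sdiff.1 hx).2
    have hyS := (mem_sdiff.1 hy).1
    have hyT := (mem_sdiff.1 hy).2
    refine ⟨insert x T, ?_, insert y T, ?_, ?_, ?_⟩
    · exact mem_powersetCard.2 ⟨insert_subset hxS hTs, by rw [card_insert_of_notMem hxT, hTc]⟩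
    · exact mem_powersetCard.2 ⟨insert_subset hyS hTs, by rw [card_insert_of_notMem hyT, hTc]⟩
    · intro h
      have : x ∈ insert y T := h ▸ mem_insert_self x T
      rcases mem_insert.1 this with h' | h'
      · exact hxy h'
      · exact hxT h'
    · ext z
      simp only [mem_inter, mem_insert]
      constructor
      · rintro ⟨h1 | h1, h2 | h2⟩
        · exact absurd (h1.symm.trans h2) hxy
        · exact h2
        · exact h1
        · exact h1
      · intro hz; exact ⟨Or.inr hz, Or.inr hz⟩

theorem stmt16 (t : ℕ) (ht : 1 ≤ t) :
    ∃ n₀ : ℕ, ∀ n : ℕ, n₀ ≤ n →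
      ∀ F ⊆ (Finset.Icc 1 n).powersetCard (t + 1), tIntersecting t F →
        (interFam F).card ≤ (interFam (At n (t + 1) t)).card := by
  refine ⟨t + 2, fun n hn F hF hint => ?_⟩
  have hIcc : (Finset.Icc 1 (t + 2)).card = t + 2 := by
    rw [Nat.card_Icc]; omega
  rw [At_eq n t hn, interFam_powersetCard _ t hIcc, card_powersetCard, hIcc]
  exact card_interFam_le t n F hF hint
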